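/- Let X be a measurable space, let D be a probability measure on X × {−1, 1}, let γ ∈ (0, 1] and η ≥ 0, and let H, h : X → ℝ be bounded measurable functions with |h(x)| ≤ 1/γ for all x. Then E_{(x,y)∼D}[φ(y·(H(x) + η·h(x)))] ≤ E_{(x,y)∼D}[φ(y·H(x))] + η·E_{(x,y)∼D}[φ′(y·H(x))·y·h(x)] + η²/(2γ²). -/

import Mathlib

open MeasureTheory

/-- The potential function φ(z) = 2 − z for z ≤ 0 and φ(z) = (z + 2)·exp(−z) for z > 0. -/
noncomputable def phi (z : ℝ) : ℝ := if z ≤ 0 then 2 - z else (z + 2) * Real.exp (-z)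

/-- The derivative of the potential function: φ′(z) = −1 for z ≤ 0 and
φ′(z) = −(z + 1)·exp(−z) for z > 0. -/
noncomputable def phi' (z : ℝ) : ℝ := if z ≤ 0 then -1 else -(z + 1) * Real.exp (-z)

noncomputable def psi (z : ℝ) : ℝ := if z ≤ 0 then 0 else z * Real.exp (-z)

lemma hasDerivAt_B (z : ℝ) :
    HasDerivAt (fun w => (w + 2) * Real.exp (-w)) (-(z + 1) * Real.exp (-z)) z := by
  have h1 : HasDerivAt (fun w : ℝ => w + 2) 1 z := (hasDerivAt_id z).add_const 2
  have h2 : HasDerivAt (fun w : ℝ => Real.exp (-w)) (Real.exp (-z) * (-1)) z :=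
    ((hasDerivAt_id z).neg).exp
  have := h1.fun_mul h2
  convert this using 1
  · rfl
  · rfl
  ring

lemma hasDerivAt_B' (z : ℝ) :
    HasDerivAt (fun w => -(w + 1) * Real.exp (-w)) (z * Real.exp (-z)) z := by
  have h1 : HasDerivAt (fun w : ℝ => -(w + 1)) (-1) z := by
    simpa using (((hasDerivAt_id z).add_const 1).fun_neg)
  have h2 : HasDerivAt (fun w : ℝ => Real.exp (-w)) (Real.exp (-z) * (-1)) z :=
    ((hasDerivAt_id z).neg).exp
  have := h1.fun_mul h2
  convert this using 1
  · rfl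
  · rfl
  ring

lemma phi_hasDerivAt (z : ℝ) : HasDerivAt phi (phi' z) z := by
  rcases lt_trichotomy z 0 with hz | hz | hz
  · have hA : HasDerivAt (fun w : ℝ => 2 - w) (-1) z := by
      simpa using (hasDerivAt_id z).const_sub 2
    have heq : phi =ᶠ[nhds z] fun w => 2 - w := by
      filter_upwards [Iio_mem_nhds hz] with w hw
      have hw' : w < 0 := hw
      simp [phi, hw'.le]
    have : HasDerivAt phi (-1) z := hA.congr_of_eventuallyEq heq
    simpa [phi', le_of_lt hz] using this
  · subst hz
    have h1 : HasDerivWithinAt phi (-1) (Set.Iic 0) 0 := by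
      have hA : HasDerivAt (fun w : ℝ => 2 - w) (-1) (0:ℝ) := by
        simpa using (hasDerivAt_id (0:ℝ)).const_sub 2
      refine (hA.hasDerivWithinAt).congr (fun w hw => ?_) (by simp [phi])
      have hw' : w ≤ 0 := hw
      simp [phi, hw']
    have h2 : HasDerivWithinAt phi (-1) (Set.Ici 0) 0 := by
      have hB := (hasDerivAt_B 0).hasDerivWithinAt (s := Set.Ici (0:ℝ))
      have hB' : HasDerivWithinAt (fun w => (w + 2) * Real.exp (-w)) (-1) (Set.Ici 0) 0 := by
        convert hB using 1; rfl; rfl; simp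
      refine hB'.congr (fun w hw => ?_) (by simp [phi])
      rcases lt_or_eq_of_le (Set.mem_Ici.mp hw) with hlt | heq
      · simp [phi, not_le.mpr hlt]
      · subst heq; simp [phi]
    have := (h1.union h2)
    rw [Set.Iic_union_Ici] at this
    have h := this.hasDerivAt (by simp)
    simpa [phi'] using h
  · have heq : phi =ᶠ[nhds z] fun w => (w + 2) * Real.exp (-w) := by
      filter_upwards [Ioi_mem_nhds hz] with w hw
      simp [phi, not_le.mpr (Set.mem_Ioi.mp hw)]
    have := (hasDerivAt_B z).congr_of_eventuallyEq heq
    simpa [phi', not_le.mpr hz] using this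

lemma phi'_hasDerivAt (z : ℝ) : HasDerivAt phi' (psi z) z := by
  rcases lt_trichotomy z 0 with hz | hz | hz
  · have hA : HasDerivAt (fun _ : ℝ => (-1 : ℝ)) 0 z := hasDerivAt_const z _
    have heq : phi' =ᶠ[nhds z] fun _ => (-1 : ℝ) := by
      filter_upwards [Iio_mem_nhds hz] with w hw
      have hw' : w < 0 := hw
      simp [phi', hw'.le]
    have : HasDerivAt phi' 0 z := hA.congr_of_eventuallyEq heq
    simpa [psi, le_of_lt hz] using this
  · subst hz
    have h1 : HasDerivWithinAt phi' 0 (Set.Iic 0) 0 := by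
      refine ((hasDerivAt_const (0:ℝ) (-1:ℝ)).hasDerivWithinAt).congr (fun w hw => ?_) (by simp [phi'])
      have hw' : w ≤ 0 := hw
      simp [phi', hw']
    have h2 : HasDerivWithinAt phi' 0 (Set.Ici 0) 0 := by
      have hB := (hasDerivAt_B' 0).hasDerivWithinAt (s := Set.Ici (0:ℝ))
      have hB' : HasDerivWithinAt (fun w => -(w + 1) * Real.exp (-w)) 0 (Set.Ici 0) 0 := by
        convert hB using 1; rfl; rfl; simp
      refine hB'.congr (fun w hw => ?_) (by simp [phi'])
      rcases lt_or_eq_of_le (Set.mem_Ici.mp hw) with hlt | heq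
      · simp [phi', not_le.mpr hlt]
      · subst heq; simp [phi']
    have := (h1.union h2)
    rw [Set.Iic_union_Ici] at this
    have h := this.hasDerivAt (by simp)
    simpa [psi] using h
  · have heq : phi' =ᶠ[nhds z] fun w => -(w + 1) * Real.exp (-w) := by
      filter_upwards [Ioi_mem_nhds hz] with w hw
      simp [phi', not_le.mpr (Set.mem_Ioi.mp hw)]
    have := (hasDerivAt_B' z).congr_of_eventuallyEq heq
    simpa [psi, not_le.mpr hz] using this

lemma psi_abs_le (z : ℝ) : |psi z| ≤ 1 := by
  unfold psi
  split_ifs with hz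
  · simp
  · push_neg at hz
    have h1 : 0 ≤ z * Real.exp (-z) := by positivity
    rw [abs_of_nonneg h1]
    calc z * Real.exp (-z) ≤ Real.exp z * Real.exp (-z) := by
          apply mul_le_mul_of_nonneg_right _ (Real.exp_nonneg _)
          linarith [Real.add_one_le_exp z]
      _ = 1 := by rw [← Real.exp_add]; simp

lemma phi'_lipschitz (u v : ℝ) : |phi' u - phi' v| ≤ |u - v| := by
  have h := Convex.norm_image_sub_le_of_norm_hasDerivWithin_le
    (f := phi') (f' := psi) (C := 1) (s := Set.univ)
    (fun x _ => (phi'_hasDerivAt x).hasDerivWithinAt)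
    (fun x _ => by simpa [Real.norm_eq_abs] using psi_abs_le x)
    convex_univ (Set.mem_univ v) (Set.mem_univ u)
  simpa [Real.norm_eq_abs, one_mul] using h

lemma phi_taylor (a b : ℝ) : phi (a + b) ≤ phi a + phi' a * b + b ^ 2 / 2 := by
  set g : ℝ → ℝ := fun t => phi (a + t * b) - t * (phi' a * b) - t ^ 2 * (b ^ 2 / 2) with hg
  have hderiv : ∀ t : ℝ, HasDerivAt g (phi' (a + t * b) * b - phi' a * b - t * b ^ 2) t := by
    intro t
    have h1 : HasDerivAt (fun t : ℝ => a + t * b) b t := by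
      simpa using ((hasDerivAt_id t).mul_const b).const_add a
    have h2 : HasDerivAt (fun t : ℝ => phi (a + t * b)) (phi' (a + t * b) * b) t :=
      by have := (phi_hasDerivAt (a + t * b)).comp t h1; exact this
    have h3 : HasDerivAt (fun t : ℝ => t * (phi' a * b)) (phi' a * b) t := by
      simpa using (hasDerivAt_id t).mul_const (phi' a * b)
    have h4 : HasDerivAt (fun t : ℝ => t ^ 2 * (b ^ 2 / 2)) (2 * t * (b ^ 2 / 2)) t := by
      simpa using ((hasDerivAt_pow 2 t).mul_const (b ^ 2 / 2))
    have := (h2.fun_sub h3).fun_sub h4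
    convert this using 1
    · rfl
    · rfl
    ring
  have hmono : AntitoneOn g (Set.Icc 0 1) := by
    apply antitoneOn_of_deriv_nonpos (convex_Icc 0 1)
    · exact Continuous.continuousOn (by
        have : Continuous g := by
          have : Differentiable ℝ g := fun t => (hderiv t).differentiableAt
          exact this.continuous
        exact this)
    · intro t _
      exact (hderiv t).differentiableAt.differentiableWithinAt
    · intro t ht
      rw [(hderiv t).deriv]
      rw [interior_Icc] at ht
      have h1 : phi' (a + t * b) * b - phi' a * b ≤ |phi' (a + t * b) - phi' a| * |b| := by
        calc phi' (a + t * b) * b - phi' a * b = (phi' (a + t * b) - phi' a) * b := by ring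
          _ ≤ |(phi' (a + t * b) - phi' a) * b| := le_abs_self _
          _ = |phi' (a + t * b) - phi' a| * |b| := abs_mul _ _
      have h2 : |phi' (a + t * b) - phi' a| ≤ |t * b| := by
        simpa using phi'_lipschitz (a + t * b) a
      have h3 : |t * b| * |b| = t * b ^ 2 := by
        rw [abs_mul, abs_of_nonneg ht.1.le]
        rw [mul_assoc, ← abs_mul, abs_mul_self, sq]
      nlinarith [abs_nonneg b, mul_le_mul_of_nonneg_right h2 (abs_nonneg b)]
  have := hmono (Set.left_mem_Icc.mpr zero_le_one) (Set.right_mem_Icc.mpr zero_le_one) zero_le_one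
  simp only [hg] at this
  simp at this
  linarith

lemma phi_nonneg (z : ℝ) : 0 ≤ phi z := by
  unfold phi; split_ifs with hz
  · linarith
  · push_neg at hz; positivity

lemma phi_le (z : ℝ) : phi z ≤ |z| + 2 := by
  unfold phi; split_ifs with hz
  · rw [abs_of_nonpos hz]; linarith
  · push_neg at hz
    rw [abs_of_pos hz]
    calc (z + 2) * Real.exp (-z) ≤ (z + 2) * 1 := by
          apply mul_le_mul_of_nonneg_left _ (by linarith)
          simpa using Real.exp_le_exp.mpr (by linarith : -z ≤ 0)
      _ ≤ z + 2 := by linarith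

lemma phi'_abs_le (z : ℝ) : |phi' z| ≤ 1 := by
  unfold phi'; split_ifs with hz
  · simp
  · push_neg at hz
    rw [abs_mul, abs_of_nonpos (by linarith : -(z+1) ≤ 0), abs_of_pos (Real.exp_pos _),
      neg_neg]
    calc (z + 1) * Real.exp (-z) ≤ Real.exp z * Real.exp (-z) := by
          apply mul_le_mul_of_nonneg_right (Real.add_one_le_exp z) (Real.exp_nonneg _)
      _ = 1 := by rw [← Real.exp_add]; simp

lemma phi_measurable : Measurable phi :=
  (phi_hasDerivAt · |>.differentiableAt.continuousAt) |> fun h =>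
    (continuous_iff_continuousAt.mpr h).measurable

lemma phi'_measurable : Measurable phi' :=
  (phi'_hasDerivAt · |>.differentiableAt.continuousAt) |> fun h =>
    (continuous_iff_continuousAt.mpr h).measurable

/-- Smoothness-based descent bound:
Φ_D(H + η h) ≤ Φ_D(H) + η·Φ′_D(H, h) + η²/(2γ²). -/
theorem smoothness_descent {X : Type*} [MeasurableSpace X]
    (D : Measure (X × ℝ)) [IsProbabilityMeasure D]
    (hlab : ∀ᵐ p ∂D, p.2 = 1 ∨ p.2 = -1)
    (γ η : ℝ) (hγ0 : 0 < γ) (hγ1 : γ ≤ 1) (hη : 0 ≤ η)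
    (H h : X → ℝ) (hHmeas : Measurable H) (hhmeas : Measurable h)
    (hHbd : ∃ C : ℝ, ∀ x, |H x| ≤ C) (hhbd : ∀ x, |h x| ≤ 1 / γ) :
    ∫ p, phi (p.2 * (H p.1 + η * h p.1)) ∂D ≤
      (∫ p, phi (p.2 * H p.1) ∂D) +
        η * (∫ p, phi' (p.2 * H p.1) * p.2 * h p.1 ∂D) + η ^ 2 / (2 * γ ^ 2) := by
  obtain ⟨C₀, hC₀⟩ := hHbd
  set C := max C₀ 0 with hCdef
  have hC : ∀ x, |H x| ≤ C := fun x => (hC₀ x).trans (le_max_left _ _)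
  have hC0 : 0 ≤ C := le_max_right _ _
  have hγinv : 0 ≤ 1 / γ := by positivity
  -- measurability
  have mf : Measurable fun p : X × ℝ => phi (p.2 * (H p.1 + η * h p.1)) :=
    phi_measurable.comp (measurable_snd.mul
      ((hHmeas.comp measurable_fst).add (((hhmeas.comp measurable_fst)).const_mul η)))
  have mg1 : Measurable fun p : X × ℝ => phi (p.2 * H p.1) :=
    phi_measurable.comp (measurable_snd.mul (hHmeas.comp measurable_fst))
  have mg2 : Measurable fun p : X × ℝ => phi' (p.2 * H p.1) * p.2 * h p.1 :=
    ((phi'_measurable.comp (measurable_snd.mul (hHmeas.comp measurable_fst))).mul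
      measurable_snd).mul (hhmeas.comp measurable_fst)
  -- integrability
  have g1int : Integrable (fun p : X × ℝ => phi (p.2 * H p.1)) D := by
    refine Integrable.mono' (integrable_const (C + 2)) mg1.aestronglyMeasurable ?_
    filter_upwards [hlab] with p hp
    have hy : |p.2| = 1 := by rcases hp with hp | hp <;> simp [hp]
    rw [Real.norm_eq_abs, abs_of_nonneg (phi_nonneg _)]
    calc phi (p.2 * H p.1) ≤ |p.2 * H p.1| + 2 := phi_le _
      _ = |H p.1| + 2 := by rw [abs_mul, hy, one_mul]
      _ ≤ C + 2 := by linarith [hC p.1]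
  have g2int : Integrable (fun p : X × ℝ => phi' (p.2 * H p.1) * p.2 * h p.1) D := by
    refine Integrable.mono' (integrable_const (1 / γ)) mg2.aestronglyMeasurable ?_
    filter_upwards [hlab] with p hp
    have hy : |p.2| = 1 := by rcases hp with hp | hp <;> simp [hp]
    rw [Real.norm_eq_abs, abs_mul, abs_mul, hy, mul_one]
    calc |phi' (p.2 * H p.1)| * |h p.1| ≤ 1 * (1 / γ) :=
          mul_le_mul (phi'_abs_le _) (hhbd p.1) (abs_nonneg _) zero_le_one
      _ = 1 / γ := one_mul _
  have fint : Integrable (fun p : X × ℝ => phi (p.2 * (H p.1 + η * h p.1))) D := by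
    refine Integrable.mono' (integrable_const (C + η * (1 / γ) + 2)) mf.aestronglyMeasurable ?_
    filter_upwards [hlab] with p hp
    have hy : |p.2| = 1 := by rcases hp with hp | hp <;> simp [hp]
    rw [Real.norm_eq_abs, abs_of_nonneg (phi_nonneg _)]
    calc phi (p.2 * (H p.1 + η * h p.1)) ≤ |p.2 * (H p.1 + η * h p.1)| + 2 := phi_le _
      _ = |H p.1 + η * h p.1| + 2 := by rw [abs_mul, hy, one_mul]
      _ ≤ C + η * (1 / γ) + 2 := by
          have := abs_add_le (H p.1) (η * h p.1)
          have h2 : |η * h p.1| ≤ η * (1 / γ) := by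
            rw [abs_mul, abs_of_nonneg hη]
            exact mul_le_mul_of_nonneg_left (hhbd p.1) hη
          linarith [hC p.1]
  -- pointwise a.e. inequality
  have hae : ∀ᵐ p ∂D, phi (p.2 * (H p.1 + η * h p.1)) ≤
      phi (p.2 * H p.1) + η * (phi' (p.2 * H p.1) * p.2 * h p.1) + η ^ 2 / (2 * γ ^ 2) := by
    filter_upwards [hlab] with p hp
    have hy2 : p.2 ^ 2 = 1 := by rcases hp with hp | hp <;> simp [hp]
    have key := phi_taylor (p.2 * H p.1) (p.2 * (η * h p.1))
    have harg : p.2 * H p.1 + p.2 * (η * h p.1) = p.2 * (H p.1 + η * h p.1) := by ring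
    rw [harg] at key
    have hlin : phi' (p.2 * H p.1) * (p.2 * (η * h p.1)) =
        η * (phi' (p.2 * H p.1) * p.2 * h p.1) := by ring
    rw [hlin] at key
    refine key.trans ?_
    have hsq : (p.2 * (η * h p.1)) ^ 2 / 2 ≤ η ^ 2 / (2 * γ ^ 2) := by
      have hh2 : h p.1 ^ 2 ≤ (1 / γ) ^ 2 := by
        rw [← sq_abs]
        exact pow_le_pow_left₀ (abs_nonneg _) (hhbd p.1) 2
      have : (p.2 * (η * h p.1)) ^ 2 = η ^ 2 * h p.1 ^ 2 := by
        rw [mul_pow, mul_pow, hy2, one_mul]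
      rw [this]
      have h1 := mul_le_mul_of_nonneg_left hh2 (sq_nonneg η)
      have h2 : η ^ 2 * (1 / γ) ^ 2 = η ^ 2 / γ ^ 2 := by ring
      have h3 : η ^ 2 / (2 * γ ^ 2) = (η ^ 2 / γ ^ 2) / 2 := by ring
      linarith
    linarith
  -- combine
  calc ∫ p, phi (p.2 * (H p.1 + η * h p.1)) ∂D
      ≤ ∫ p, (phi (p.2 * H p.1) + η * (phi' (p.2 * H p.1) * p.2 * h p.1)
          + η ^ 2 / (2 * γ ^ 2)) ∂D := by
        refine integral_mono_ae fint ?_ hae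
        exact (g1int.add (g2int.const_mul η)).add (integrable_const _)
    _ = (∫ p, phi (p.2 * H p.1) ∂D) +
        η * (∫ p, phi' (p.2 * H p.1) * p.2 * h p.1 ∂D) + η ^ 2 / (2 * γ ^ 2) := by
        have hsum : Integrable (fun p : X × ℝ =>
            phi (p.2 * H p.1) + η * (phi' (p.2 * H p.1) * p.2 * h p.1)) D :=
          g1int.add (g2int.const_mul η)
        have hmul : Integrable (fun p : X × ℝ =>
            η * (phi' (p.2 * H p.1) * p.2 * h p.1)) D := g2int.const_mul η
        rw [integral_add hsum (integrable_const _), integral_add g1int hmul,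
          MeasureTheory.integral_const_mul, integral_const]
        simp
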